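/- Let τ = (1 + √5)/2 and let V ⊆ ℝ³ be the set of 30 points consisting of all cyclic permutations of the coordinates of (0, 0, ±τ) together with all points (±1/2, ±τ/2, ±τ²/2) and their cyclic coordinate permutations (all sign choices independent). Then: (i) every v ∈ V has ‖v‖ = τ; (ii) the minimum of ‖v − w‖ over distinct v, w ∈ V equals 1. Consequently, with r = 1/√5, the 30 closed balls of radius r centered at the points ((1 + r)/τ)·v for v ∈ V all touch the closed unit ball centered at the origin (each center has norm 1 + r), the minimal distance between distinct centers equals 2r, so these balls have pairwise disjoint interiors and some pairs of them are tangent. -/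

import Mathlib

noncomputable section

/-- Euclidean 3-space. -/
abbrev E3 := EuclideanSpace ℝ (Fin 3)

/-- A point of ℝ³ from its coordinates. -/
def pt (a b c : ℝ) : E3 := WithLp.toLp 2 ![a, b, c]

/-- Cyclic permutation of the coordinates. -/
def cyc (x : E3) : E3 := pt (x 2) (x 0) (x 1)

/-- The golden ratio `τ = (1 + √5)/2`. -/
def τ : ℝ := (1 + Real.sqrt 5) / 2

/-- The sign choices `±1`. -/
def Sgn : Set ℝ := {1, -1}

/-- The 30 vertices of the regular icosidodecahedron of edge length 1: all cyclic
permutations of the coordinates of `(0, 0, ±τ)` together with all points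
`(±1/2, ±τ/2, ±τ²/2)` and their cyclic coordinate permutations. -/
def V : Set E3 :=
  {v | ∃ k : Fin 3, ∃ s ∈ Sgn, v = cyc^[(k : ℕ)] (pt 0 0 (s * τ))} ∪
  {v | ∃ k : Fin 3, ∃ s₁ ∈ Sgn, ∃ s₂ ∈ Sgn, ∃ s₃ ∈ Sgn,
    v = cyc^[(k : ℕ)] (pt (s₁ / 2) (s₂ * τ / 2) (s₃ * τ ^ 2 / 2))}

/-!
Scaled by `4`, the vertices have coordinates in `ℤ[√5]` (`4τ = 2 + 2√5`, `2τ = 1 + √5`,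
`2τ² = 3 + √5`), and the order of `ℤ√5` is the one induced by `ℤ√5 → ℝ`. So the scaled squared
norms and squared distances are exact elements of `ℤ[√5]` that the kernel compares by evaluation:
every squared norm is `16τ² = 24 + 8√5`, and every squared distance between distinct vertices is
at least `16`, with equality for `(0, 0, τ)` and `(1/2, τ/2, τ²/2)`. For the balls, `r = 1/√5`
makes the scaling factor `(1 + r)/τ` equal to `2r`, so centre distances are `2r` times vertex
distances.
-/

namespace Zsqrtd

theorem toReal_nonneg {d : ℕ} {a : ℤ√d} (ha : 0 ≤ a) : 0 ≤ toReal (Int.natCast_nonneg d) a := by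
  have hd : √(d : ℝ) ^ 2 = d := Real.sq_sqrt d.cast_nonneg
  obtain ⟨x, y, rfl | rfl | rfl⟩ := nonneg_cases (nonneg_iff_zero_le.mpr ha)
  · simp only [toReal_apply]; positivity
  · have h : ((d * y * y : ℕ) : ℝ) ≤ (1 * x * x : ℕ) :=
      Nat.cast_le.mpr (nonnegg_pos_neg.mp (nonneg_iff_zero_le.mpr ha))
    have hyx : (y * √(d : ℝ)) ^ 2 ≤ (x : ℝ) ^ 2 := by push_cast at h; rw [mul_pow, hd]; linarith
    have := (sq_le_sq₀ (by positivity) (by positivity)).mp hyx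
    simp only [toReal_apply]; push_cast; linarith
  · have h : ((1 * x * x : ℕ) : ℝ) ≤ (d * y * y : ℕ) :=
      Nat.cast_le.mpr (nonnegg_neg_pos.mp (nonneg_iff_zero_le.mpr ha))
    have hxy : (x : ℝ) ^ 2 ≤ (y * √(d : ℝ)) ^ 2 := by push_cast at h; rw [mul_pow, hd]; linarith
    have := (sq_le_sq₀ (by positivity) (by positivity)).mp hxy
    simp only [toReal_apply]; push_cast; linarith

theorem toReal_monotone (d : ℕ) : Monotone (toReal (Int.natCast_nonneg d)) := fun a b hab =>
  sub_nonneg.mp <| by simpa only [map_sub] using toReal_nonneg (sub_nonneg.mpr hab)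

end Zsqrtd

section CyclicOrbit

variable {A B : Type*} [AddCommGroup A] [AddCommGroup B]

def cycCoords {α : Type*} (x : Fin 3 → α) : Fin 3 → α := ![x 2, x 0, x 1]

/-- Left summand: number of cyclic shifts and sign of `(0, 0, ±a)`; right summand: the same for
`(±b, ±c, ±d)`. -/
abbrev VertexIndex := (Fin 3 × ℤˣ) ⊕ (Fin 3 × ℤˣ × ℤˣ × ℤˣ)

def icosiVertex (a b c d : A) : VertexIndex → Fin 3 → A
  | .inl (k, s) => cycCoords^[k] ![0, 0, (s : ℤ) • a]
  | .inr (k, s₁, s₂, s₃) => cycCoords^[k] ![(s₁ : ℤ) • b, (s₂ : ℤ) • c, (s₃ : ℤ) • d]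

theorem comp_icosiVertex (f : A →+ B) (a b c d : A) (i) :
    f ∘ icosiVertex a b c d i = icosiVertex (f a) (f b) (f c) (f d) i := by
  have hcyc : Function.Semiconj (f ∘ ·) (cycCoords (α := A)) cycCoords := fun x => by
    ext j; fin_cases j <;> rfl
  rcases i with ⟨k, s⟩ | ⟨k, s₁, s₂, s₃⟩ <;>
  · simp only [icosiVertex, (hcyc.iterate_right k).eq]
    congr 1; ext j; fin_cases j <;> simp

end CyclicOrbit

theorem exists_mem_Sgn_iff {P : ℝ → Prop} : (∃ s ∈ Sgn, P s) ↔ ∃ u : ℤˣ, P ((u : ℤ) : ℝ) := by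
  constructor
  · rintro ⟨s, rfl | rfl, h⟩
    exacts [⟨1, by simpa using h⟩, ⟨-1, by simpa using h⟩]
  · rintro ⟨u, h⟩
    rcases Int.units_eq_one_or u with rfl | rfl
    exacts [⟨1, Or.inl rfl, by simpa using h⟩, ⟨-1, Or.inr rfl, by simpa using h⟩]

theorem V_eq_range_icosiVertex :
    V = Set.range fun i => WithLp.toLp 2 (icosiVertex τ (1 / 2) (τ / 2) (τ ^ 2 / 2) i) := by
  have hcyc : Function.Semiconj (WithLp.toLp 2) cycCoords cyc := fun _ => rfl
  ext v
  simp only [V, Set.mem_union, Set.mem_ofPred_eq, Set.mem_range, Sum.exists, Prod.exists,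
    exists_mem_Sgn_iff, icosiVertex, (hcyc.iterate_right _).eq, zsmul_eq_mul, mul_one_div,
    mul_div_assoc, pt, eq_comm (a := v)]

local notation "ι" => Zsqrtd.toReal (Int.natCast_nonneg 5)

def intVertex : VertexIndex → Fin 3 → ℤ√(5 : ℕ) :=
  icosiVertex ⟨2, 2⟩ 2 ⟨1, 1⟩ ⟨3, 1⟩

theorem intVertex_dotProduct_self : ∀ i, intVertex i ⬝ᵥ intVertex i = ⟨24, 8⟩ := by
  decide

set_option synthInstance.maxSize 512 in
theorem sixteen_le_intVertex_sub_dotProduct :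
    ∀ i j, i ≠ j → 16 ≤ (intVertex i - intVertex j) ⬝ᵥ (intVertex i - intVertex j) := by
  decide

theorem intVertex_sub_dotProduct_eq_sixteen :
    (intVertex (.inl (0, 1)) - intVertex (.inr (0, 1, 1, 1))) ⬝ᵥ
      (intVertex (.inl (0, 1)) - intVertex (.inr (0, 1, 1, 1))) = 16 := by
  decide

theorem norm_sq_toLp_mul_map {R n : Type*} [CommRing R] [Fintype n] (f : R →+* ℝ) (c : ℝ)
    (x : n → R) : ‖WithLp.toLp 2 (fun j => c * f (x j))‖ ^ 2 = c ^ 2 * f (x ⬝ᵥ x) := by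
  rw [EuclideanSpace.real_norm_sq_eq]
  simp only [dotProduct, map_sum, map_mul, Finset.mul_sum]
  exact Finset.sum_congr rfl fun _ _ => by ring

def vertex (i : VertexIndex) : E3 :=
  WithLp.toLp 2 fun j => 4⁻¹ * ι (intVertex i j)

theorem icosiVertex_golden (i) :
    icosiVertex τ (1 / 2) (τ / 2) (τ ^ 2 / 2) i = fun j => 4⁻¹ * ι (intVertex i j) := by
  have h5 : √5 ^ 2 = 5 := Real.sq_sqrt (by norm_num)
  convert (comp_icosiVertex ((4 : ℝ)⁻¹ • (ι : ℤ√(5 : ℕ) →+ ℝ)) ⟨2, 2⟩ 2 ⟨1, 1⟩ ⟨3, 1⟩ i).symm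
    using 2
  all_goals first | rfl | simp only [τ, AddMonoidHom.smul_apply, AddMonoidHom.coe_coe,
    Zsqrtd.toReal_apply, Zsqrtd.re_ofNat, Zsqrtd.im_ofNat, smul_eq_mul]
  all_goals push_cast; first | ring1 | linear_combination h5 / 8

theorem V_eq_range_vertex : V = Set.range vertex := by
  simp only [V_eq_range_icosiVertex, icosiVertex_golden]
  rfl

theorem vertex_sub (i j) :
    vertex i - vertex j = WithLp.toLp 2 fun k => 4⁻¹ * ι ((intVertex i - intVertex j) k) := by
  ext k; simp [vertex]; ring

theorem norm_vertex (i) : ‖vertex i‖ = τ := by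
  have h := norm_sq_toLp_mul_map ι 4⁻¹ (intVertex i)
  rw [intVertex_dotProduct_self] at h
  refine (sq_eq_sq₀ (norm_nonneg _) Real.goldenRatio_pos.le).mp ?_
  rw [vertex, h, Real.goldenRatio_sq]
  simp [Zsqrtd.toReal_apply]
  ring

theorem one_le_norm_vertex_sub {i j} (hij : i ≠ j) : 1 ≤ ‖vertex i - vertex j‖ := by
  have h16 := Zsqrtd.toReal_monotone 5 (sixteen_le_intVertex_sub_dotProduct i j hij)
  refine (one_le_sq_iff₀ (norm_nonneg _)).mp ?_
  rw [map_ofNat] at h16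
  rw [vertex_sub, norm_sq_toLp_mul_map]
  linarith

theorem norm_vertex_sub_eq_one : ‖vertex (.inl (0, 1)) - vertex (.inr (0, 1, 1, 1))‖ = 1 := by
  refine (pow_eq_one_iff_of_nonneg (norm_nonneg _) two_ne_zero).mp ?_
  rw [vertex_sub, norm_sq_toLp_mul_map, intVertex_sub_dotProduct_eq_sixteen, map_ofNat]
  norm_num

theorem vertex_injective : Function.Injective vertex := fun i j hij => by
  by_contra hne
  have := one_le_norm_vertex_sub hne
  norm_num [hij] at this

theorem ncard_V : V.ncard = 30 := by
  rw [V_eq_range_vertex, Set.ncard_range_of_injective vertex_injective, Nat.card_eq_fintype_card]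
  rfl

theorem norm_of_mem_V {v : E3} (hv : v ∈ V) : ‖v‖ = τ := by
  rw [V_eq_range_vertex] at hv
  obtain ⟨i, rfl⟩ := hv
  exact norm_vertex i

theorem isLeast_norm_sub_V : IsLeast {d | ∃ v ∈ V, ∃ w ∈ V, v ≠ w ∧ d = ‖v - w‖} 1 := by
  rw [V_eq_range_vertex]
  refine ⟨⟨_, ⟨_, rfl⟩, _, ⟨_, rfl⟩, fun h => ?_, norm_vertex_sub_eq_one.symm⟩, ?_⟩
  · exact absurd (vertex_injective h) Sum.inl_ne_inr
  · rintro d ⟨_, ⟨i, rfl⟩, _, ⟨j, rfl⟩, hij, rfl⟩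
    exact one_le_norm_vertex_sub fun h => hij (h ▸ rfl)

theorem isLeast_dist_smul {E : Type*} [NormedAddCommGroup E] [NormedSpace ℝ E] {S : Set E}
    {m c : ℝ} (hc : 0 ≤ c) (h : IsLeast {d | ∃ v ∈ S, ∃ w ∈ S, v ≠ w ∧ d = ‖v - w‖} m) :
    IsLeast {d | ∃ v ∈ S, ∃ w ∈ S, v ≠ w ∧ d = dist (c • v) (c • w)} (c * m) := by
  have hdist (v w : E) : dist (c • v) (c • w) = c * ‖v - w‖ := by
    rw [dist_eq_norm, ← smul_sub, norm_smul, Real.norm_of_nonneg hc]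
  obtain ⟨⟨v, hv, w, hw, hvw, rfl⟩, hlow⟩ := h
  refine ⟨⟨v, hv, w, hw, hvw, (hdist v w).symm⟩, ?_⟩
  rintro d ⟨v', hv', w', hw', hvw', rfl⟩
  rw [hdist]
  exact mul_le_mul_of_nonneg_left (hlow ⟨v', hv', w', hw', hvw', rfl⟩) hc

theorem one_add_one_div_sqrt_five_div_τ : (1 + 1 / √5) / τ = 2 * (1 / √5) := by
  unfold τ
  field_simp
  ring

theorem stmt17 (r : ℝ) (hr : r = 1 / Real.sqrt 5)
    (ctr : E3 → E3) (hctr : ctr = fun v => ((1 + r) / τ) • v) :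
    V.ncard = 30 ∧
    (∀ v ∈ V, ‖v‖ = τ) ∧
    IsLeast {d : ℝ | ∃ v ∈ V, ∃ w ∈ V, v ≠ w ∧ d = ‖v - w‖} 1 ∧
    (∀ v ∈ V, ‖ctr v‖ = 1 + r) ∧
    IsLeast {d : ℝ | ∃ v ∈ V, ∃ w ∈ V, v ≠ w ∧ d = dist (ctr v) (ctr w)} (2 * r) ∧
    (∀ v ∈ V, ∀ w ∈ V, v ≠ w →
      Disjoint (interior (Metric.closedBall (ctr v) r))
        (interior (Metric.closedBall (ctr w) r))) ∧
    (∃ v ∈ V, ∃ w ∈ V, v ≠ w ∧ dist (ctr v) (ctr w) = 2 * r) := by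
  have hτ : 0 < τ := Real.goldenRatio_pos
  have hr0 : 0 < r := by rw [hr]; positivity
  have hscale : (1 + r) / τ = 2 * r := by rw [hr]; exact one_add_one_div_sqrt_five_div_τ
  have hsep : IsLeast {d | ∃ v ∈ V, ∃ w ∈ V, v ≠ w ∧ d = dist (ctr v) (ctr w)} (2 * r) := by
    simpa only [hctr, hscale, mul_one] using
      isLeast_dist_smul (by positivity : 0 ≤ 2 * r) isLeast_norm_sub_V
  refine ⟨ncard_V, fun v hv => norm_of_mem_V hv, isLeast_norm_sub_V, fun v hv => ?_, hsep, ?_, ?_⟩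
  · rw [hctr, norm_smul, norm_of_mem_V hv, Real.norm_of_nonneg (div_nonneg (by positivity) hτ.le),
      div_mul_cancel₀ _ hτ.ne']
  · intro v hv w hw hvw
    rw [interior_closedBall', interior_closedBall']
    exact Metric.ball_disjoint_ball (by linarith [hsep.2 ⟨v, hv, w, hw, hvw, rfl⟩])
  · obtain ⟨v, hv, w, hw, hvw, h⟩ := hsep.1
    exact ⟨v, hv, w, hw, hvw, h.symm⟩
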